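/- arXiv:2505.01087 — 6 statements merged into one kernel-verified Lean document; each statement's English description precedes it below -/
import Mathlib

section
/- Let n ≥ 1 and let h : {1,…,n} → {1,…,n} be a Hessenberg function. Let Γ_h be the simple graph on vertex set {1,…,n} in which two vertices i < j are adjacent if and only if j ≤ h(i). Then for every integer m₀ ≥ 0, the number of proper colorings κ : {1,…,n} → {1,…,m₀} of Γ_h (i.e. maps with κ(i) ≠ κ(j) whenever i and j are adjacent) equals ∏_{i=1}^{n} (m₀ − (h(i) − i)). Equivalently, the chromatic polynomial of Γ_h is X_{Γ_h}(m) = ∏_{i=1}^{n} (m − (h(i) − i)). -/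
/-- Discrete intermediate value fact: if `f` starts at least `m`, ends at most `m`,
and decreases by at most 1 at each step, it hits `m`. -/
private lemma hess_ivt (f : ℕ → ℕ) (m : ℕ) (n : ℕ) (h1 : m ≤ f 0)
    (hs : ∀ k < n, f k ≤ f (k + 1) + 1) (h2 : f n ≤ m) : ∃ k ≤ n, f k = m := by
  induction n with
  | zero => exact ⟨0, le_refl 0, by omega⟩
  | succ n ih =>
    by_cases hfn : f n ≤ m
    · obtain ⟨k, hk, he⟩ := ih (fun k hk => hs k (by omega)) hfn
      exact ⟨k, by omega, he⟩
    · have := hs n (by omega)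
      exact ⟨n + 1, le_refl _, by omega⟩

private lemma hess_aux (n : ℕ) : ∀ (h : Fin n → Fin n), (∀ i, i ≤ h i) → Monotone h →
    ∀ m₀ : ℕ,
    (Nat.card {κ : Fin n → Fin m₀ // ∀ i j : Fin n, i < j → j ≤ h i → κ i ≠ κ j} : ℤ) =
      ∏ i : Fin n, ((m₀ : ℤ) - (((h i : ℕ) : ℤ) - ((i : ℕ) : ℤ))) := by
  induction n with
  | zero =>
    intro h _ _ m₀
    rw [Fin.prod_univ_zero]
    have : Unique {κ : Fin 0 → Fin m₀ // ∀ i j : Fin 0, i < j → j ≤ h i → κ i ≠ κ j} :=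
      ⟨⟨⟨fun i => i.elim0, fun i => i.elim0⟩⟩, fun κ => Subtype.ext (funext fun i => i.elim0)⟩
    rw [Nat.card_unique]
    norm_num
  | succ n ih =>
    intro h hh1 hh2 m₀
    classical
    set h0 : ℕ := (h 0 : ℕ) with hh0def
    have hh0n : h0 ≤ n := Nat.lt_succ_iff.mp (h 0).isLt
    have hpos : ∀ i : Fin n, 1 ≤ ((h i.succ : ℕ)) := by
      intro i
      have := hh1 i.succ
      rw [Fin.le_def] at this
      simp only [Fin.val_succ] at this
      omega
    -- the Hessenberg function for the graph restricted to vertices 1..n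
    have hlt' : ∀ i : Fin n, (h i.succ : ℕ) - 1 < n := by
      intro i
      have := (h i.succ).isLt
      have := hpos i
      have := i.isLt
      omega
    set h' : Fin n → Fin n := fun i => ⟨(h i.succ : ℕ) - 1, hlt' i⟩ with hh'def
    have hh1' : ∀ i : Fin n, i ≤ h' i := by
      intro i
      have := hh1 i.succ
      rw [Fin.le_def] at this ⊢
      simp only [Fin.val_succ, hh'def] at this ⊢
      omega
    have hh2' : Monotone h' := by
      intro a b hab
      have := hh2 (Fin.succ_le_succ_iff.mpr hab)
      rw [Fin.le_def] at this ⊢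
      simp only [hh'def]
      omega
    have key : ∀ i j : Fin n, (j ≤ h' i) ↔ (j.succ ≤ h i.succ) := by
      intro i j
      rw [Fin.le_def, Fin.le_def]
      simp only [hh'def, Fin.val_succ]
      have := hpos i
      omega
    -- the fiber of colors available for vertex 0
    set Q : (Fin n → Fin m₀) → Prop :=
      fun κ' => ∀ i j : Fin n, i < j → j ≤ h' i → κ' i ≠ κ' j with hQdef
    set Fb : {κ' : Fin n → Fin m₀ // Q κ'} → Type :=
      fun κ' => {c : Fin m₀ // ∀ k : Fin n, (k : ℕ) < h0 → c ≠ κ'.1 k} with hFbdef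
    -- the first h0 vertices of the restricted graph get pairwise distinct colors
    have hdist : ∀ (κ' : {κ' : Fin n → Fin m₀ // Q κ'}) (a b : Fin n),
        (a : ℕ) < (b : ℕ) → (b : ℕ) < h0 → κ'.1 a ≠ κ'.1 b := by
      intro κ' a b hab hb
      apply κ'.2 a b (by rwa [Fin.lt_def])
      rw [Fin.le_def]
      simp only [hh'def]
      have h0le : (h 0 : ℕ) ≤ (h a.succ : ℕ) := hh2 (Fin.zero_le _)
      have := hpos a
      omega
    have e : {κ : Fin (n+1) → Fin m₀ // ∀ i j : Fin (n+1), i < j → j ≤ h i → κ i ≠ κ j} ≃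
        Σ κ' : {κ' : Fin n → Fin m₀ // Q κ'}, Fb κ' :=
      { toFun := fun κ =>
          ⟨⟨fun i => κ.1 i.succ, by
            intro i j hij hle
            exact κ.2 i.succ j.succ (by rwa [Fin.succ_lt_succ_iff]) ((key i j).mp hle)⟩,
           ⟨κ.1 0, by
            intro k hk
            apply κ.2 0 k.succ (Fin.succ_pos k)
            rw [Fin.le_def]
            simpa using hk⟩⟩
        invFun := fun p =>
          ⟨Fin.cons p.2.1 p.1.1, by
            intro i j hij hle
            induction i using Fin.cases with
            | zero =>
              induction j using Fin.cases with
              | zero => exact absurd hij (lt_irrefl _)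
              | succ j =>
                simp only [Fin.cons_zero, Fin.cons_succ]
                apply p.2.2 j
                rw [Fin.le_def] at hle
                simpa using hle
            | succ i =>
              induction j using Fin.cases with
              | zero => exact absurd hij (by simp [Fin.lt_def])
              | succ j =>
                simp only [Fin.cons_succ]
                exact p.1.2 i j (Fin.succ_lt_succ_iff.mp hij) ((key i j).mpr hle)⟩
        left_inv := fun κ => Subtype.ext (Fin.cons_self_tail κ.1)
        right_inv := fun p => rfl }
    rw [Nat.card_eq_fintype_card, Fintype.card_congr e, Fintype.card_sigma]
    by_cases hcase : h0 ≤ m₀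
    · -- each fiber has exactly m₀ - h0 elements
      have hfiber : ∀ κ' : {κ' : Fin n → Fin m₀ // Q κ'}, Fintype.card (Fb κ') = m₀ - h0 := by
        intro κ'
        set g : Fin h0 → Fin m₀ := fun k => κ'.1 ⟨k, lt_of_lt_of_le k.isLt hh0n⟩ with hgdef
        have hginj : Function.Injective g := by
          intro a b hab
          by_contra hne
          rcases Ne.lt_or_gt (fun hc : (a : ℕ) = (b : ℕ) => hne (Fin.ext hc)) with hlt | hlt
          · exact hdist κ' _ _ hlt b.isLt hab
          · exact hdist κ' _ _ hlt a.isLt hab.symm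
        have hmem : ∀ c : Fin m₀,
            (∀ k : Fin n, (k : ℕ) < h0 → c ≠ κ'.1 k) ↔ c ∉ Finset.image g Finset.univ := by
          intro c
          simp only [Finset.mem_image, Finset.mem_univ, true_and, not_exists, hgdef]
          constructor
          · intro hc k hk
            exact (hc ⟨k, lt_of_lt_of_le k.isLt hh0n⟩ k.isLt hk.symm).elim
          · intro hc k hk hck
            exact hc ⟨(k : ℕ), hk⟩ hck.symm
        have h1 : Fintype.card (Fb κ') =
            Fintype.card {c : Fin m₀ // c ∉ Finset.image g Finset.univ} :=
          Fintype.card_congr (Equiv.subtypeEquivRight hmem)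
        rw [h1, Fintype.card_subtype_compl, Fintype.card_coe,
          Finset.card_image_of_injective _ hginj]
        simp
      rw [Finset.sum_congr rfl (fun κ' _ => hfiber κ'), Finset.sum_const, Finset.card_univ,
        smul_eq_mul, Nat.cast_mul, Nat.cast_sub hcase, ← Nat.card_eq_fintype_card,
        ih h' hh1' hh2' m₀, Fin.prod_univ_succ]
      have hfac : ∀ i : Fin n,
          ((m₀ : ℤ) - (((h' i : ℕ) : ℤ) - ((i : ℕ) : ℤ))) =
          ((m₀ : ℤ) - (((h i.succ : ℕ) : ℤ) - ((i.succ : ℕ) : ℤ))) := by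
        intro i
        simp only [hh'def, Fin.val_succ]
        have := hpos i
        push_cast [Nat.cast_sub this]
        ring
      rw [Finset.prod_congr rfl (fun i _ => hfac i)]
      simp only [Fin.val_zero, Nat.cast_zero]
      ring
    · -- too few colors: both sides are zero
      have hempty : IsEmpty {κ' : Fin n → Fin m₀ // Q κ'} := by
        constructor
        intro κ'
        have hh0n' := hh0n
        set g : Fin h0 → Fin m₀ := fun k => κ'.1 ⟨k, lt_of_lt_of_le k.isLt hh0n⟩ with hgdef
        have hginj : Function.Injective g := by
          intro a b hab
          by_contra hne
          rcases Ne.lt_or_gt (fun hc : (a : ℕ) = (b : ℕ) => hne (Fin.ext hc)) with hlt | hlt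
          · exact hdist κ' _ _ hlt b.isLt hab
          · exact hdist κ' _ _ hlt a.isLt hab.symm
        have := Fintype.card_le_of_injective g hginj
        simp only [Fintype.card_fin] at this
        omega
      rw [Finset.univ_eq_empty, Finset.sum_empty]
      symm
      -- find a vertex i with h i - i = m₀, giving a zero factor
      have hiv : ∃ k ≤ n, (if hk : k < n + 1 then ((h ⟨k, hk⟩ : ℕ) - k) else 0) = m₀ := by
        apply hess_ivt
        · have p0 : 0 < n + 1 := Nat.zero_lt_succ n
          rw [dif_pos p0]
          have hz : (⟨0, p0⟩ : Fin (n + 1)) = 0 := rfl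
          rw [hz]
          omega
        · intro k hk
          have p1 : k < n + 1 := by omega
          have p2 : k + 1 < n + 1 := by omega
          rw [dif_pos p1, dif_pos p2]
          have hm : h ⟨k, p1⟩ ≤ h ⟨k + 1, p2⟩ := hh2 (by rw [Fin.le_def]; simp)
          rw [Fin.le_def] at hm
          omega
        · have pn : n < n + 1 := by omega
          rw [dif_pos pn]
          have := (h ⟨n, pn⟩).isLt
          omega
      obtain ⟨k, hkn, hkeq⟩ := hiv
      have pk : k < n + 1 := by omega
      rw [dif_pos pk] at hkeq
      apply Finset.prod_eq_zero (Finset.mem_univ (⟨k, pk⟩ : Fin (n + 1)))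
      have hge := hh1 ⟨k, pk⟩
      rw [Fin.le_def] at hge
      have hv : ((⟨k, pk⟩ : Fin (n + 1)) : ℕ) = k := rfl
      rw [hv] at hge ⊢
      omega

/-- Let `h : Fin n → Fin n` be a Hessenberg function (`i ≤ h i` for all `i`,
and `h` nondecreasing), and let `Γ_h` be the graph on `Fin n` with an edge between `i < j`
iff `j ≤ h i`.  Then for every `m₀ ≥ 0`, the number of proper colorings of `Γ_h` with `m₀`
colors is `∏ᵢ (m₀ − (h(i) − i))`; i.e. the chromatic polynomial of `Γ_h` is
`∏ᵢ (m − (h(i) − i))`. -/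
theorem hessenberg_chromatic_polynomial (n : ℕ) (hn : 1 ≤ n) (h : Fin n → Fin n)
    (hh1 : ∀ i, i ≤ h i) (hh2 : Monotone h) (m₀ : ℕ) :
    (Nat.card {κ : Fin n → Fin m₀ // ∀ i j : Fin n, i < j → j ≤ h i → κ i ≠ κ j} : ℤ) =
      ∏ i : Fin n, ((m₀ : ℤ) - (((h i : ℕ) : ℤ) - ((i : ℕ) : ℤ))) := by
  exact hess_aux n h hh1 hh2 m₀
end

section
/- Let d ≥ 0, let b_0,…,b_d be nonnegative integers, and let p(t) = Σ_{i=0}^{d} b_i·t^i. Then for every n ≥ 0, the identity Σ_{n_0+⋯+n_d=n} (∏_{i=0}^{d} ⟨b_i·m, n_i⟩)·t^{1·n_1+2·n_2+⋯+d·n_d} = Σ_{λ⊢n} z_λ^{-1}·(∏_{i=1}^{ℓ(λ)} p(t^{λ_i}))·m^{ℓ(λ)} holds in ℚ[m,t], where the left sum is over all (d+1)-tuples of nonnegative integers with n_0+⋯+n_d = n and the right sum is over all partitions λ = (λ_1,…,λ_{ℓ(λ)}) of n. -/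
open Polynomial

abbrev Qmt : Type := Polynomial (Polynomial ℚ)

noncomputable def risingCoeff (b n : ℕ) : Polynomial ℚ :=
  Polynomial.C ((n.factorial : ℚ)⁻¹) *
    ∏ i ∈ Finset.range n, (Polynomial.C (b : ℚ) * Polynomial.X + Polynomial.C (i : ℚ))

def zPart (μ : Multiset ℕ) : ℕ := ∏ i ∈ μ.toFinset, i ^ μ.count i * (μ.count i).factorial

lemma risingCoeff_zero (b : ℕ) : risingCoeff b 0 = 1 := by
  simp [risingCoeff]

lemma risingCoeff_rec (b n : ℕ) :
    Polynomial.C ((n : ℚ)) * risingCoeff b n =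
      (Polynomial.C (b : ℚ) * Polynomial.X) * ∑ j ∈ Finset.range n, risingCoeff b j := by
  induction n with
  | zero => simp
  | succ n ih =>
    have h1 : Polynomial.C (((n+1 : ℕ) : ℚ)) * risingCoeff b (n + 1) =
        (Polynomial.C (b : ℚ) * Polynomial.X + Polynomial.C (n : ℚ)) * risingCoeff b n := by
      rw [risingCoeff, risingCoeff, Finset.prod_range_succ, Nat.factorial_succ]
      push_cast
      rw [mul_inv, map_mul]
      have hn : (Polynomial.C ((n:ℚ)+1)) * Polynomial.C (((n:ℚ)+1)⁻¹) = 1 := by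
        rw [← map_mul, mul_inv_cancel₀ (by positivity), map_one]
      calc Polynomial.C ((n:ℚ)+1) * (Polynomial.C (((n:ℚ)+1)⁻¹) * Polynomial.C ((n.factorial:ℚ)⁻¹) *
            ((∏ i ∈ Finset.range n, (Polynomial.C (b : ℚ) * Polynomial.X + Polynomial.C (i : ℚ))) *
              (Polynomial.C (b : ℚ) * Polynomial.X + Polynomial.C (n : ℚ))))
          = (Polynomial.C ((n:ℚ)+1) * Polynomial.C (((n:ℚ)+1)⁻¹)) *
            ((Polynomial.C (b : ℚ) * Polynomial.X + Polynomial.C (n : ℚ)) *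
              (Polynomial.C ((n.factorial:ℚ)⁻¹) *
                ∏ i ∈ Finset.range n, (Polynomial.C (b : ℚ) * Polynomial.X + Polynomial.C (i : ℚ)))) := by ring
        _ = _ := by rw [hn, one_mul]
    rw [h1, add_mul, ih, Finset.sum_range_succ, mul_add]
    ring

noncomputable def Lside (d : ℕ) (b : Fin (d + 1) → ℕ) (n : ℕ) : Qmt :=
  ∑ f ∈ Finset.Nat.antidiagonalTuple (d + 1) n,
    Polynomial.C (∏ i, risingCoeff (b i) (f i)) *
      (Polynomial.X : Qmt) ^ (∑ i : Fin (d + 1), (i : ℕ) * f i)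

noncomputable def Pk (d : ℕ) (b : Fin (d + 1) → ℕ) (k : ℕ) : Qmt :=
  ∑ j : Fin (d + 1), Polynomial.C (Polynomial.C ((b j : ℚ))) * (Polynomial.X : Qmt) ^ ((j : ℕ) * k)

set_option maxHeartbeats 2000000 in
lemma L_rec (d : ℕ) (b : Fin (d + 1) → ℕ) (n : ℕ) :
    Polynomial.C (Polynomial.C (n : ℚ)) * Lside d b n =
      ∑ k ∈ Finset.Icc 1 n,
        Polynomial.C (Polynomial.X : Polynomial ℚ) * Pk d b k * Lside d b (n - k) := by
  classical
  set T : (Fin (d + 1) → ℕ) → Fin (d + 1) → ℕ → Qmt := fun f j r =>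
    Polynomial.C (Polynomial.X : Polynomial ℚ) * Polynomial.C (Polynomial.C ((b j : ℚ))) *
      Polynomial.C (risingCoeff (b j) r * ∏ i ∈ Finset.univ.erase j, risingCoeff (b i) (f i)) *
      (Polynomial.X : Qmt) ^ (∑ i : Fin (d + 1), (i : ℕ) * f i) with hT
  set U : ℕ → Fin (d + 1) → (Fin (d + 1) → ℕ) → Qmt := fun k j g =>
    Polynomial.C (Polynomial.X : Polynomial ℚ) * Polynomial.C (Polynomial.C ((b j : ℚ))) *
      (Polynomial.X : Qmt) ^ ((j : ℕ) * k) *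
      (Polynomial.C (∏ i, risingCoeff (b i) (g i)) *
        (Polynomial.X : Qmt) ^ (∑ i : Fin (d + 1), (i : ℕ) * g i)) with hU
  have step1 : Polynomial.C (Polynomial.C (n : ℚ)) * Lside d b n =
      ∑ f ∈ Finset.Nat.antidiagonalTuple (d + 1) n, ∑ j : Fin (d + 1),
        ∑ r ∈ Finset.range (f j), T f j r := by
    rw [Lside, Finset.mul_sum]
    refine Finset.sum_congr rfl fun f hf => ?_
    rw [Finset.Nat.mem_antidiagonalTuple] at hf
    have hn : ((n : ℚ)) = ∑ j : Fin (d + 1), ((f j : ℚ)) := by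
      rw [← hf]; push_cast; ring
    rw [hn, map_sum, map_sum, Finset.sum_mul]
    refine Finset.sum_congr rfl fun j _ => ?_
    have key : (Polynomial.C ((f j : ℚ))) * ∏ i, risingCoeff (b i) (f i) =
        ∑ r ∈ Finset.range (f j),
          (Polynomial.C ((b j : ℚ)) * Polynomial.X) *
            (risingCoeff (b j) r * ∏ i ∈ Finset.univ.erase j, risingCoeff (b i) (f i)) := by
      rw [← Finset.mul_prod_erase _ _ (Finset.mem_univ j), ← mul_assoc, risingCoeff_rec,
        mul_assoc, Finset.sum_mul, Finset.mul_sum]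
    rw [← mul_assoc, ← Polynomial.C_mul, key, map_sum, Finset.sum_mul]
    refine Finset.sum_congr rfl fun r _ => ?_
    rw [hT]
    simp only [map_mul]
    ring
  rw [step1]
  have step3 : ∀ k, Polynomial.C (Polynomial.X : Polynomial ℚ) * Pk d b k * Lside d b (n - k) =
      ∑ j : Fin (d + 1), ∑ g ∈ Finset.Nat.antidiagonalTuple (d + 1) (n - k), U k j g := by
    intro k
    rw [Pk, Lside, Finset.mul_sum, Finset.sum_comm]
    refine Finset.sum_congr rfl fun g _ => ?_
    rw [Finset.mul_sum, Finset.sum_mul]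
    refine Finset.sum_congr rfl fun j _ => ?_
    rw [hU]; ring
  rw [Finset.sum_congr rfl fun k _ => step3 k]
  -- now the bijection
  have packL : ∑ f ∈ Finset.Nat.antidiagonalTuple (d + 1) n, ∑ j : Fin (d + 1),
      ∑ r ∈ Finset.range (f j), T f j r =
      ∑ p ∈ (Finset.Nat.antidiagonalTuple (d + 1) n).sigma
          (fun f => Finset.univ.sigma (fun j => Finset.range (f j))),
        T p.1 p.2.1 p.2.2 := by
    rw [Finset.sum_sigma]
    exact Finset.sum_congr rfl fun f _ => by rw [Finset.sum_sigma]
  have packR : ∑ k ∈ Finset.Icc 1 n, ∑ j : Fin (d + 1),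
      ∑ g ∈ Finset.Nat.antidiagonalTuple (d + 1) (n - k), U k j g =
      ∑ q ∈ (Finset.Icc 1 n).sigma
          (fun k => Finset.univ.sigma
            (fun _ : Fin (d + 1) => Finset.Nat.antidiagonalTuple (d + 1) (n - k))),
        U q.1 q.2.1 q.2.2 := by
    rw [Finset.sum_sigma]
    exact Finset.sum_congr rfl fun k _ => by rw [Finset.sum_sigma]
  rw [packL, packR]
  refine Finset.sum_nbij'
    (i := fun p => ⟨p.1 (p.2.1) - p.2.2, p.2.1, Function.update p.1 p.2.1 p.2.2⟩)
    (j := fun q => ⟨Function.update q.2.2 q.2.1 (q.2.2 q.2.1 + q.1), q.2.1, q.2.2 q.2.1⟩)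
    ?_ ?_ ?_ ?_ ?_
  · rintro ⟨f, j, r⟩ hp
    simp only [Finset.mem_sigma, Finset.mem_univ, Finset.mem_range, true_and,
      Finset.Nat.mem_antidiagonalTuple, Finset.mem_Icc] at hp ⊢
    obtain ⟨hf, hr⟩ := hp
    have hfj : f j ≤ n := hf ▸ Finset.single_le_sum (fun i _ => Nat.zero_le _) (Finset.mem_univ j)
    have hsum : ∑ i, Function.update f j r i = r + ∑ i ∈ Finset.univ.erase j, f i := by
      rw [Finset.sum_update_of_mem (Finset.mem_univ j), Finset.sdiff_singleton_eq_erase]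
    have hsplit : f j + ∑ i ∈ Finset.univ.erase j, f i = n := by
      rw [Finset.add_sum_erase _ _ (Finset.mem_univ j), hf]
    refine ⟨⟨by omega, by omega⟩, ?_⟩
    rw [hsum]; omega
  · rintro ⟨k, j, g⟩ hq
    simp only [Finset.mem_sigma, Finset.mem_univ, Finset.mem_range, true_and,
      Finset.Nat.mem_antidiagonalTuple, Finset.mem_Icc] at hq ⊢
    obtain ⟨⟨hk1, hk2⟩, hg⟩ := hq
    have hsum : ∑ i, Function.update g j (g j + k) i =
        (g j + k) + ∑ i ∈ Finset.univ.erase j, g i := by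
      rw [Finset.sum_update_of_mem (Finset.mem_univ j), Finset.sdiff_singleton_eq_erase]
    have hsplit : g j + ∑ i ∈ Finset.univ.erase j, g i = n - k := by
      rw [Finset.add_sum_erase _ _ (Finset.mem_univ j), hg]
    refine ⟨?_, ?_⟩
    · rw [hsum]; omega
    · rw [Function.update_self]; omega
  · rintro ⟨f, j, r⟩ hp
    simp only [Finset.mem_sigma, Finset.mem_univ, Finset.mem_range, true_and,
      Finset.Nat.mem_antidiagonalTuple] at hp
    obtain ⟨hf, hr⟩ := hp
    have hfeq : Function.update (Function.update f j r) j
        ((Function.update f j r) j + (f j - r)) = f := by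
      funext i
      by_cases hij : i = j
      · subst hij; simp only [Function.update_self]; omega
      · simp [Function.update_of_ne hij]
    dsimp only
    refine Sigma.ext hfeq (heq_of_eq ?_)
    refine Sigma.ext rfl (heq_of_eq ?_)
    exact Function.update_self _ _ _
  · rintro ⟨k, j, g⟩ hq
    simp only [Finset.mem_sigma, Finset.mem_univ, Finset.mem_Icc, true_and,
      Finset.Nat.mem_antidiagonalTuple] at hq
    obtain ⟨⟨hk1, hk2⟩, hg⟩ := hq
    have h1 : Function.update g j (g j + k) j = g j + k := Function.update_self _ _ _
    dsimp only
    refine Sigma.ext (by dsimp only; rw [h1]; omega) (heq_of_eq ?_)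
    refine Sigma.ext rfl (heq_of_eq ?_)
    rw [h1]
    funext i
    by_cases hij : i = j
    · subst hij; simp
    · simp [Function.update_of_ne hij]
  · rintro ⟨f, j, r⟩ hp
    simp only [Finset.mem_sigma, Finset.mem_univ, Finset.mem_range, true_and,
      Finset.Nat.mem_antidiagonalTuple] at hp
    obtain ⟨hf, hr⟩ := hp
    rw [hT, hU]
    simp only []
    have hprod : ∏ i, risingCoeff (b i) (Function.update f j r i) =
        risingCoeff (b j) r * ∏ i ∈ Finset.univ.erase j, risingCoeff (b i) (f i) := by
      rw [← Finset.mul_prod_erase _ _ (Finset.mem_univ j), Function.update_self]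
      congr 1
      exact Finset.prod_congr rfl fun i hi => by
        rw [Function.update_of_ne (Finset.ne_of_mem_erase hi)]
    have hw : ∑ i : Fin (d + 1), (i : ℕ) * f i =
        (j : ℕ) * (f j - r) + ∑ i : Fin (d + 1), (i : ℕ) * Function.update f j r i := by
      rw [← Finset.add_sum_erase _ (fun i : Fin (d+1) => (i : ℕ) * f i) (Finset.mem_univ j),
        ← Finset.add_sum_erase _ (fun i : Fin (d+1) => (i : ℕ) * Function.update f j r i)
          (Finset.mem_univ j)]
      have he : ∑ i ∈ Finset.univ.erase j, (i : ℕ) * Function.update f j r i =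
          ∑ i ∈ Finset.univ.erase j, (i : ℕ) * f i :=
        Finset.sum_congr rfl fun i hi => by
          rw [Function.update_of_ne (Finset.ne_of_mem_erase hi)]
      have hm : (j : ℕ) * (f j - r) + (j : ℕ) * r = (j : ℕ) * f j := by
        rw [← Nat.mul_add]; congr 1; omega
      rw [he, Function.update_self]
      omega
    rw [hprod, hw, pow_add]
    ring

noncomputable def Rterm (d : ℕ) (b : Fin (d + 1) → ℕ) (s : Multiset ℕ) : Qmt :=
  Polynomial.C (Polynomial.C ((zPart s : ℚ)⁻¹)) *
    (Polynomial.C (Polynomial.X : Polynomial ℚ)) ^ (Multiset.card s) *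
    (s.map (fun e => Pk d b e)).prod

noncomputable def Rside (d : ℕ) (b : Fin (d + 1) → ℕ) (n : ℕ) : Qmt :=
  ∑ lam : Nat.Partition n, Rterm d b lam.parts

lemma zPart_cons (k : ℕ) (s : Multiset ℕ) :
    zPart (k ::ₘ s) = (k * (s.count k + 1)) * zPart s := by
  classical
  rw [zPart, zPart]
  by_cases hk : k ∈ s.toFinset
  · have htf : (k ::ₘ s).toFinset = s.toFinset := by
      rw [Multiset.toFinset_cons, Finset.insert_eq_self.2 hk]
    rw [htf, ← Finset.mul_prod_erase _ _ hk, ← Finset.mul_prod_erase _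
      (fun i => i ^ s.count i * (s.count i).factorial) hk]
    have hck : (k ::ₘ s).count k = s.count k + 1 := by
      rw [Multiset.count_cons_self]
    have hrest : ∏ i ∈ s.toFinset.erase k, i ^ (k ::ₘ s).count i * ((k ::ₘ s).count i).factorial =
        ∏ i ∈ s.toFinset.erase k, i ^ s.count i * (s.count i).factorial :=
      Finset.prod_congr rfl fun i hi => by
        rw [Multiset.count_cons_of_ne (Finset.ne_of_mem_erase hi)]
    rw [hck, hrest, pow_succ, Nat.factorial_succ]
    ring
  · have hcnt : s.count k = 0 := by
      simpa [Multiset.count_eq_zero] using fun h => hk (Multiset.mem_toFinset.2 h)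
    have htf : (k ::ₘ s).toFinset = insert k s.toFinset := Multiset.toFinset_cons _ _
    rw [htf, Finset.prod_insert hk]
    have hck : (k ::ₘ s).count k = 1 := by rw [Multiset.count_cons_self, hcnt]
    have hrest : ∏ i ∈ s.toFinset, i ^ (k ::ₘ s).count i * ((k ::ₘ s).count i).factorial =
        ∏ i ∈ s.toFinset, i ^ s.count i * (s.count i).factorial :=
      Finset.prod_congr rfl fun i hi => by
        rw [Multiset.count_cons_of_ne]
        rintro rfl; exact hk hi
    rw [hck, hrest, hcnt]
    simp [Nat.factorial]
lemma zPart_pos (s : Multiset ℕ) (h : ∀ i ∈ s, 0 < i) : 0 < zPart s := by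
  rw [zPart]
  refine Finset.prod_pos fun i hi => ?_
  have := h i (Multiset.mem_toFinset.1 hi)
  positivity

lemma Rterm_cons (d : ℕ) (b : Fin (d + 1) → ℕ) (k : ℕ) (s : Multiset ℕ)
    (hk : 0 < k) (hs : ∀ i ∈ s, 0 < i) :
    Polynomial.C (Polynomial.C (((k * (s.count k + 1) : ℕ) : ℚ))) * Rterm d b (k ::ₘ s) =
      Polynomial.C (Polynomial.X : Polynomial ℚ) * Pk d b k * Rterm d b s := by
  rw [Rterm, Rterm, zPart_cons]
  have hz : ((zPart s : ℚ)) ≠ 0 := by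
    exact_mod_cast (zPart_pos s hs).ne'
  have ha : (((k * (s.count k + 1) : ℕ) : ℚ)) ≠ 0 := by
    have : 0 < k * (s.count k + 1) := by positivity
    exact_mod_cast this.ne'
  have hinv : Polynomial.C (((((k * (s.count k + 1)) * zPart s : ℕ) : ℚ))⁻¹) =
      Polynomial.C ((((k * (s.count k + 1) : ℕ) : ℚ))⁻¹) *
        Polynomial.C (((zPart s : ℚ))⁻¹) := by
    rw [← map_mul]
    congr 1
    push_cast
    rw [mul_inv]
  rw [Multiset.card_cons, Multiset.map_cons, Multiset.prod_cons, hinv, pow_succ]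
  have hcancel : Polynomial.C (Polynomial.C (((k * (s.count k + 1) : ℕ) : ℚ))) *
      Polynomial.C (Polynomial.C ((((k * (s.count k + 1) : ℕ) : ℚ))⁻¹)) = 1 := by
    rw [← map_mul, ← map_mul, mul_inv_cancel₀ ha, map_one, map_one]
  calc Polynomial.C (Polynomial.C (((k * (s.count k + 1) : ℕ) : ℚ))) *
      (Polynomial.C (Polynomial.C ((((k * (s.count k + 1) : ℕ) : ℚ))⁻¹) *
          Polynomial.C (((zPart s : ℚ))⁻¹)) *
        ((Polynomial.C (Polynomial.X : Polynomial ℚ)) ^ (Multiset.card s) *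
          Polynomial.C (Polynomial.X : Polynomial ℚ)) *
        (Pk d b k * (s.map (fun e => Pk d b e)).prod))
      = (Polynomial.C (Polynomial.C (((k * (s.count k + 1) : ℕ) : ℚ))) *
          Polynomial.C (Polynomial.C ((((k * (s.count k + 1) : ℕ) : ℚ))⁻¹))) *
        (Polynomial.C (Polynomial.X : Polynomial ℚ) * Pk d b k *
          (Polynomial.C (Polynomial.C (((zPart s : ℚ))⁻¹)) *
            (Polynomial.C (Polynomial.X : Polynomial ℚ)) ^ (Multiset.card s) *
            (s.map (fun e => Pk d b e)).prod)) := by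
        rw [map_mul]; ring
    _ = _ := by rw [hcancel, one_mul]

lemma parts_sum_eq (n : ℕ) (lam : Nat.Partition n) :
    n = ∑ k ∈ lam.parts.toFinset, k * lam.parts.count k := by
  conv_lhs => rw [← lam.parts_sum]
  conv_lhs => rw [← Multiset.map_id lam.parts]
  rw [Finset.sum_multiset_map_count]
  exact Finset.sum_congr rfl fun k _ => by rw [smul_eq_mul, id, mul_comm]

def erasePart {n : ℕ} (lam : Nat.Partition n) (k : ℕ) (h : k ∈ lam.parts) :
    Nat.Partition (n - k) where
  parts := lam.parts.erase k
  parts_pos := fun hi => lam.parts_pos (Multiset.mem_of_mem_erase hi)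
  parts_sum := by
    have hce : k ::ₘ lam.parts.erase k = lam.parts := Multiset.cons_erase h
    have : k + (lam.parts.erase k).sum = n := by
      rw [← Multiset.sum_cons, hce, lam.parts_sum]
    omega

def consPart {n : ℕ} (k : ℕ) (hk : 1 ≤ k) (hkn : k ≤ n) (mu : Nat.Partition (n - k)) :
    Nat.Partition n where
  parts := k ::ₘ mu.parts
  parts_pos := fun hi => by
    rw [Multiset.mem_cons] at hi
    rcases hi with rfl | hi
    · omega
    · exact mu.parts_pos hi
  parts_sum := by rw [Multiset.sum_cons, mu.parts_sum]; omega

set_option maxHeartbeats 1000000 in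
lemma R_rec (d : ℕ) (b : Fin (d + 1) → ℕ) (n : ℕ) :
    Polynomial.C (Polynomial.C (n : ℚ)) * Rside d b n =
      ∑ k ∈ Finset.Icc 1 n,
        Polynomial.C (Polynomial.X : Polynomial ℚ) * Pk d b k * Rside d b (n - k) := by
  classical
  rw [Rside, Finset.mul_sum]
  have step1 : ∀ lam : Nat.Partition n,
      Polynomial.C (Polynomial.C (n : ℚ)) * Rterm d b lam.parts =
        ∑ k ∈ lam.parts.toFinset,
          Polynomial.C (Polynomial.C (((k * lam.parts.count k : ℕ) : ℚ))) *
            Rterm d b lam.parts := by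
    intro lam
    have hn : ((n : ℚ)) = ∑ k ∈ lam.parts.toFinset, (((k * lam.parts.count k : ℕ) : ℚ)) := by
      rw [← Nat.cast_sum]
      exact_mod_cast congrArg (Nat.cast : ℕ → ℚ) (parts_sum_eq n lam)
    rw [hn, map_sum, map_sum, Finset.sum_mul]
  rw [Finset.sum_congr rfl fun lam _ => step1 lam]
  have step3 : ∀ k, Polynomial.C (Polynomial.X : Polynomial ℚ) * Pk d b k * Rside d b (n - k) =
      ∑ mu : Nat.Partition (n - k),
        Polynomial.C (Polynomial.X : Polynomial ℚ) * Pk d b k * Rterm d b mu.parts := by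
    intro k
    rw [Rside, Finset.mul_sum]
  rw [Finset.sum_congr rfl fun k _ => step3 k]
  rw [show (∑ lam : Nat.Partition n, ∑ k ∈ lam.parts.toFinset,
        Polynomial.C (Polynomial.C (((k * lam.parts.count k : ℕ) : ℚ))) *
          Rterm d b lam.parts) =
      ∑ p ∈ (Finset.univ : Finset (Nat.Partition n)).sigma (fun lam => lam.parts.toFinset),
        Polynomial.C (Polynomial.C (((p.2 * p.1.parts.count p.2 : ℕ) : ℚ))) *
          Rterm d b p.1.parts from by rw [Finset.sum_sigma],
    show (∑ k ∈ Finset.Icc 1 n, ∑ mu : Nat.Partition (n - k),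
        Polynomial.C (Polynomial.X : Polynomial ℚ) * Pk d b k * Rterm d b mu.parts) =
      ∑ q ∈ (Finset.Icc 1 n).sigma
          (fun k => (Finset.univ : Finset (Nat.Partition (n - k)))),
        Polynomial.C (Polynomial.X : Polynomial ℚ) * Pk d b q.1 * Rterm d b q.2.parts from by
      rw [Finset.sum_sigma]]
  refine Finset.sum_bij'
    (i := fun p hp => ⟨p.2, erasePart p.1 p.2
      (Multiset.mem_toFinset.1 ((Finset.mem_sigma.1 hp).2))⟩)
    (j := fun q hq => ⟨consPart q.1 (Finset.mem_Icc.1 (Finset.mem_sigma.1 hq).1).1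
      (Finset.mem_Icc.1 (Finset.mem_sigma.1 hq).1).2 q.2, q.1⟩)
    ?_ ?_ ?_ ?_ ?_
  · -- maps into codomain
    rintro ⟨lam, k⟩ hp
    have hmem : k ∈ lam.parts := Multiset.mem_toFinset.1 ((Finset.mem_sigma.1 hp).2)
    have h1 : 0 < k := lam.parts_pos hmem
    have h2 : k ≤ n := by
      rw [← lam.parts_sum]
      exact Multiset.single_le_sum (fun x _ => Nat.zero_le x) _ hmem
    simp only [Finset.mem_sigma, Finset.mem_univ, Finset.mem_Icc, and_true]
    exact ⟨h1, h2⟩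
  · -- maps into domain
    rintro ⟨k, mu⟩ hq
    simp only [Finset.mem_sigma, Finset.mem_univ, true_and]
    exact Multiset.mem_toFinset.2 (Multiset.mem_cons_self _ _)
  · -- left inverse
    rintro ⟨lam, k⟩ hp
    have hmem : k ∈ lam.parts := Multiset.mem_toFinset.1 ((Finset.mem_sigma.1 hp).2)
    refine Sigma.ext ?_ (heq_of_eq rfl)
    exact Nat.Partition.ext (Multiset.cons_erase hmem)
  · -- right inverse
    rintro ⟨k, mu⟩ hq
    refine Sigma.ext rfl (heq_of_eq ?_)
    exact Nat.Partition.ext (Multiset.erase_cons_head _ _)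
  · -- values agree
    rintro ⟨lam, k⟩ hp
    have hmem : k ∈ lam.parts := Multiset.mem_toFinset.1 ((Finset.mem_sigma.1 hp).2)
    have hk : 0 < k := lam.parts_pos hmem
    have hpos : ∀ i ∈ lam.parts.erase k, 0 < i := fun i hi =>
      lam.parts_pos (Multiset.mem_of_mem_erase hi)
    have hcount : lam.parts.count k = (lam.parts.erase k).count k + 1 := by
      conv_lhs => rw [← Multiset.cons_erase hmem]
      rw [Multiset.count_cons_self]
    calc Polynomial.C (Polynomial.C (((k * lam.parts.count k : ℕ) : ℚ))) * Rterm d b lam.parts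
        = Polynomial.C (Polynomial.C (((k * ((lam.parts.erase k).count k + 1) : ℕ) : ℚ))) *
            Rterm d b (k ::ₘ lam.parts.erase k) := by
          rw [← hcount, Multiset.cons_erase hmem]
      _ = Polynomial.C (Polynomial.X : Polynomial ℚ) * Pk d b k *
            Rterm d b (lam.parts.erase k) := Rterm_cons d b k _ hk hpos
      _ = _ := rfl

lemma L_zero (d : ℕ) (b : Fin (d + 1) → ℕ) : Lside d b 0 = 1 := by
  rw [Lside, Finset.Nat.antidiagonalTuple_zero_right]
  simp [risingCoeff_zero]

lemma parts_zero (lam : Nat.Partition 0) : lam.parts = 0 := by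
  rw [Multiset.eq_zero_iff_forall_notMem]
  intro a ha
  have h1 := lam.parts_pos ha
  have h2 := lam.parts_sum
  have := Multiset.single_le_sum (fun x _ => Nat.zero_le x) _ ha
  omega

lemma R_zero (d : ℕ) (b : Fin (d + 1) → ℕ) : Rside d b 0 = 1 := by
  rw [Rside]
  rw [Finset.sum_congr rfl fun lam _ => by rw [parts_zero lam]]
  rw [Finset.sum_const]
  have : Fintype.card (Nat.Partition 0) = 1 := Fintype.card_unique
  rw [Finset.card_univ, this, one_smul, Rterm]
  simp [zPart]

lemma L_eq_R (d : ℕ) (b : Fin (d + 1) → ℕ) (n : ℕ) : Lside d b n = Rside d b n := by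
  induction n using Nat.strong_induction_on with
  | _ n ih =>
    match n with
    | 0 => rw [L_zero, R_zero]
    | (m + 1) =>
      have hcan : (Polynomial.C (Polynomial.C (((m + 1 : ℕ) : ℚ))) : Qmt) ≠ 0 := by
        rw [Ne, Polynomial.C_eq_zero, Polynomial.C_eq_zero]
        exact_mod_cast Nat.succ_ne_zero m
      refine mul_left_cancel₀ hcan ?_
      rw [L_rec, R_rec]
      refine Finset.sum_congr rfl fun k hk => ?_
      rw [Finset.mem_Icc] at hk
      rw [ih (m + 1 - k) (by omega)]

lemma mapC_comp (d : ℕ) (b : Fin (d + 1) → ℕ) (e : ℕ) :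
    Polynomial.map (Polynomial.C : ℚ →+* Polynomial ℚ)
      ((∑ i : Fin (d + 1), Polynomial.C ((b i : ℚ)) * Polynomial.X ^ (i : ℕ)).comp
        (Polynomial.X ^ e)) = Pk d b e := by
  rw [Pk]
  have hcomp : (∑ i : Fin (d + 1), Polynomial.C ((b i : ℚ)) * Polynomial.X ^ (i : ℕ)).comp
      (Polynomial.X ^ e) =
      ∑ i : Fin (d + 1), Polynomial.C ((b i : ℚ)) * Polynomial.X ^ ((i : ℕ) * e) := by
    rw [Polynomial.comp, Polynomial.eval₂_finset_sum]
    refine Finset.sum_congr rfl fun i _ => ?_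
    rw [Polynomial.eval₂_mul, Polynomial.eval₂_C, Polynomial.eval₂_X_pow, ← pow_mul,
      Nat.mul_comm]
  rw [hcomp, Polynomial.map_sum]
  refine Finset.sum_congr rfl fun i _ => ?_
  rw [Polynomial.map_mul, Polynomial.map_C, Polynomial.map_pow, Polynomial.map_X]

/-- For nonnegative integers `b₀, …, b_d`, with `p(t) = Σᵢ bᵢ·tⁱ`, and any
`n ≥ 0`, one has in `ℚ[m][t]`:
`Σ_{n₀+⋯+n_d=n} (∏ᵢ ⟨bᵢ·m, nᵢ⟩)·t^{1·n₁+⋯+d·n_d} = Σ_{λ⊢n} z_λ⁻¹·(∏ᵢ p(t^{λᵢ}))·m^{ℓ(λ)}`. -/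
theorem prod_space_char_poly (d : ℕ) (b : Fin (d + 1) → ℕ) (n : ℕ) :
    ∑ f ∈ Finset.Nat.antidiagonalTuple (d + 1) n,
        Polynomial.C (∏ i, risingCoeff (b i) (f i)) * (Polynomial.X : Qmt) ^ (∑ i : Fin (d + 1), (i : ℕ) * f i) =
      ∑ lam : Nat.Partition n,
        Polynomial.C ((zPart lam.parts : ℚ)⁻¹ •
            (Polynomial.X : Polynomial ℚ) ^ Multiset.card lam.parts) *
          Polynomial.map (Polynomial.C : ℚ →+* Polynomial ℚ)
            ((lam.parts.map fun e =>
              (∑ i : Fin (d + 1), Polynomial.C ((b i : ℚ)) * Polynomial.X ^ (i : ℕ)).comp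
                (Polynomial.X ^ e)).prod) := by
  have hL : ∑ f ∈ Finset.Nat.antidiagonalTuple (d + 1) n,
      Polynomial.C (∏ i, risingCoeff (b i) (f i)) *
        (Polynomial.X : Qmt) ^ (∑ i : Fin (d + 1), (i : ℕ) * f i) = Lside d b n := rfl
  rw [hL, L_eq_R, Rside]
  refine Finset.sum_congr rfl fun lam _ => ?_
  rw [Rterm]
  rw [Polynomial.smul_eq_C_mul, map_mul, map_pow, Polynomial.map_multiset_prod,
    Multiset.map_map]
  have : ∀ e : ℕ, (Polynomial.map (Polynomial.C : ℚ →+* Polynomial ℚ) ∘ fun e =>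
      (∑ i : Fin (d + 1), Polynomial.C ((b i : ℚ)) * Polynomial.X ^ (i : ℕ)).comp
        (Polynomial.X ^ e)) e = Pk d b e := fun e => mapC_comp d b e
  rw [Multiset.map_congr rfl fun e _ => this e]
end

section
/- Let m₀ ≥ 2 and k ≥ 1 be integers. Then (c_k/((k+1)m₀−1)!)² > (c_{k−1}/((k·m₀−1)!))·(c_{k+1}/(((k+2)m₀−1)!)) and (d_k/((k+1)m₀−1)!)² > (d_{k−1}/((k·m₀−1)!))·(d_{k+1}/(((k+2)m₀−1)!)); that is, the sequences {c_k/((k+1)m₀−1)!}_{k≥0} and {d_k/((k+1)m₀−1)!}_{k≥0} are strictly log-concave. -/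
/-- `c_k = (k+1)^{k-1}/k!` (with an integer exponent, so that `c₀ = 1`). -/
noncomputable def ck (k : ℕ) : ℚ := ((k : ℚ) + 1) ^ ((k : ℤ) - 1) / (k.factorial : ℚ)

/-- `d_k = (k+1)^{k-2}/k!` (with an integer exponent, so that `d₀ = 1`, `d₁ = 1/2`). -/
noncomputable def dk (k : ℕ) : ℚ := ((k : ℚ) + 1) ^ ((k : ℤ) - 2) / (k.factorial : ℚ)

/-!
Write `c_k / ((k+1)m₀ - 1)! = (c_k / k!) / (((k+1)m₀ - 1)! / k!)`, and likewise for `d_k`. The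
numerators are `(k+1)^(k+e) / k!²` with `e = -1, -2`, log-concave for every `e ≥ -2` because
`k(k+2) ≤ (k+1)²`. The denominator is strictly log-convex: this amounts to `(k+1) A_k < k A_{k+1}`
for the rising factorials `A_k = (km₀)(km₀+1)⋯((k+1)m₀-1)`, and splitting off the first factor `km₀` of `A_k`
leaves a rising factorial that grows strictly with `k` once `m₀ ≥ 2`. A log-concave sequence
divided by a strictly log-convex one is strictly log-concave.
-/

open scoped Nat

variable {K : Type*} [Field K] [LinearOrder K] [IsStrictOrderedRing K]

theorem div_mul_div_lt_sq_div {x₀ x₁ x₂ y₀ y₁ y₂ : K} (hx : x₀ * x₂ ≤ x₁ ^ 2)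
    (hy : y₁ ^ 2 < y₀ * y₂) (hx₁ : x₁ ≠ 0) (hy₁ : y₁ ≠ 0) :
    x₀ / y₀ * (x₂ / y₂) < (x₁ / y₁) ^ 2 := by
  have hy₁sq : 0 < y₁ ^ 2 := by positivity
  rw [div_mul_div_comm, div_pow, div_lt_div_iff₀ (hy₁sq.trans hy) hy₁sq]
  calc x₀ * x₂ * y₁ ^ 2 ≤ x₁ ^ 2 * y₁ ^ 2 := by gcongr
    _ < x₁ ^ 2 * (y₀ * y₂) := by gcongr

namespace Nat

theorem ascFactorial_lt_ascFactorial {a b k : ℕ} (hab : a < b) (hk : k ≠ 0) :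
    a.ascFactorial k < b.ascFactorial k := by
  obtain ⟨i, rfl⟩ := exists_eq_succ_of_ne_zero hk
  obtain ⟨b, rfl⟩ := exists_eq_succ_of_ne_zero (ne_zero_of_lt hab)
  rw [ascFactorial_succ, ascFactorial_succ]
  exact Nat.mul_lt_mul_of_lt_of_le (by omega) (ascFactorial_le i hab.le) (ascFactorial_pos b i)

theorem mul_ascFactorial_lt_mul_ascFactorial {a b m : ℕ} (ha : 0 < a) (hab : a < b)
    (hm : 2 ≤ m) : b * a.ascFactorial m < a * b.ascFactorial m := by
  obtain ⟨j, rfl⟩ : ∃ j, m = j + 1 := ⟨m - 1, by omega⟩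
  rw [ascFactorial_succ, ← succ_ascFactorial, ascFactorial_succ, ← succ_ascFactorial,
    mul_left_comm b]
  exact Nat.mul_lt_mul_of_pos_left (Nat.mul_lt_mul_of_pos_left
    (ascFactorial_lt_ascFactorial (by omega) (by omega)) (ha.trans hab)) ha

theorem add_one_mul_factorial_sq_lt {m k : ℕ} (hm : 2 ≤ m) (hk : 1 ≤ k) :
    (k + 1) * ((k + 1) * m - 1)! ^ 2 < k * ((k * m - 1)! * ((k + 2) * m - 1)!) := by
  have hP : (k * m - 1)! * (k * m).ascFactorial m = ((k + 1) * m - 1)! := by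
    rw [factorial_mul_ascFactorial' _ _ (by positivity)]
    congr 2
    ring
  have hQ : ((k + 1) * m - 1)! * ((k + 1) * m).ascFactorial m = ((k + 2) * m - 1)! := by
    rw [factorial_mul_ascFactorial' _ _ (by positivity)]
    congr 2
    ring
  have hratio : (k + 1) * (k * m).ascFactorial m < k * ((k + 1) * m).ascFactorial m := by
    have := mul_ascFactorial_lt_mul_ascFactorial (a := k * m) (b := (k + 1) * m)
      (by positivity) (by nlinarith) hm
    refine Nat.lt_of_mul_lt_mul_left (a := m) ?_
    linarith
  calc (k + 1) * ((k + 1) * m - 1)! ^ 2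
      = (k * m - 1)! * ((k + 1) * m - 1)! * ((k + 1) * (k * m).ascFactorial m) := by
        rw [← hP]; ring
    _ < (k * m - 1)! * ((k + 1) * m - 1)! * (k * ((k + 1) * m).ascFactorial m) :=
        Nat.mul_lt_mul_of_pos_left hratio (by positivity)
    _ = k * ((k * m - 1)! * ((k + 2) * m - 1)!) := by rw [← hQ]; ring

end Nat

theorem sq_factorial_div_factorial_lt_mul {m k : ℕ} (hm : 2 ≤ m) (hk : 1 ≤ k) :
    (((k + 1) * m - 1)! / k ! : K) ^ 2 <
      (k * m - 1)! / (k - 1)! * (((k + 2) * m - 1)! / (k + 1)!) := by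
  obtain ⟨n, rfl⟩ := Nat.exists_eq_add_of_le' hk
  have key : ((n : K) + 1 + 1) * (((n + 1 + 1) * m - 1)! : K) ^ 2 <
      (n + 1) * (((n + 1) * m - 1)! * ((n + 1 + 2) * m - 1)!) := by
    exact_mod_cast Nat.add_one_mul_factorial_sq_lt hm hk
  rw [Nat.add_sub_cancel, div_pow, div_mul_div_comm,
    div_lt_div_iff₀ (by positivity) (by positivity)]
  simp only [Nat.factorial_succ]
  push_cast
  linear_combination ((n : K) + 1) * (n ! : K) ^ 2 * key

theorem mul_lt_sq_div_factorial_of_logConcave {x : ℕ → K} {m k : ℕ} (hm : 2 ≤ m) (hk : 1 ≤ k)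
    (hx : x (k - 1) / (k - 1)! * (x (k + 1) / (k + 1)!) ≤ (x k / k !) ^ 2) (hxk : x k ≠ 0) :
    x (k - 1) / (k * m - 1)! * (x (k + 1) / ((k + 2) * m - 1)!) <
      (x k / ((k + 1) * m - 1)!) ^ 2 := by
  have := div_mul_div_lt_sq_div hx (sq_factorial_div_factorial_lt_mul hm hk)
    (by positivity) (by positivity)
  simpa [div_div_div_cancel_right₀, Nat.factorial_ne_zero] using this

noncomputable def zpowDivFactorialSq (e : ℤ) (n : ℕ) : K :=
  ((n : K) + 1) ^ ((n : ℤ) + e) / (n ! : K) ^ 2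

theorem zpowDivFactorialSq_mul_le_sq {e : ℤ} (he : -2 ≤ e) {k : ℕ} (hk : 1 ≤ k) :
    zpowDivFactorialSq (K := K) e (k - 1) * zpowDivFactorialSq e (k + 1) ≤
      zpowDivFactorialSq e k ^ 2 := by
  obtain ⟨n, rfl⟩ := Nat.exists_eq_add_of_le' hk
  obtain ⟨j, hj⟩ : ∃ j : ℕ, (n : ℤ) + e + 2 = j := ⟨((n : ℤ) + e + 2).toNat, by omega⟩
  set a : K := n + 1 with ha
  have key : a ^ j * (a + 2) ^ j ≤ (a + 1) ^ j * (a + 1) ^ j := by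
    rw [← mul_pow, ← mul_pow]
    exact pow_le_pow_left₀ (by positivity) (by nlinarith) j
  simp only [zpowDivFactorialSq, Nat.add_sub_cancel, Nat.factorial_succ]
  rw [show ((n : ℤ) + e) = j - 2 by omega,
    show (((n + 1 : ℕ) : ℤ) + e) = j - 1 by push_cast; omega,
    show (((n + 1 + 1 : ℕ) : ℤ) + e) = j by push_cast; omega]
  push_cast
  rw [zpow_sub₀ (by positivity), zpow_sub₀ (by positivity)]
  simp only [zpow_natCast]
  calc _ = a ^ j * (a + 2) ^ j / (a ^ 2 * (a + 1) * n ! ^ 2) ^ 2 := by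
        rw [ha]; field_simp; ring
    _ ≤ (a + 1) ^ j * (a + 1) ^ j / (a ^ 2 * (a + 1) * n ! ^ 2) ^ 2 := by gcongr
    _ = _ := by rw [ha]; field_simp

theorem ck_div_factorial (k : ℕ) : ck k / k ! = zpowDivFactorialSq (-1) k := by
  rw [ck, zpowDivFactorialSq, div_div, sq, sub_eq_add_neg]

theorem dk_div_factorial (k : ℕ) : dk k / k ! = zpowDivFactorialSq (-2) k := by
  rw [dk, zpowDivFactorialSq, div_div, sq, sub_eq_add_neg]

/-- For integers `m₀ ≥ 2` and `k ≥ 1`, the sequences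
`{c_k/((k+1)m₀−1)!}` and `{d_k/((k+1)m₀−1)!}` are strictly log-concave at `k`. -/
theorem ck_dk_strict_log_concave (m₀ k : ℕ) (hm : 2 ≤ m₀) (hk : 1 ≤ k) :
    (ck k / (((k + 1) * m₀ - 1).factorial : ℚ)) ^ 2 >
        ck (k - 1) / ((k * m₀ - 1).factorial : ℚ) *
          (ck (k + 1) / (((k + 2) * m₀ - 1).factorial : ℚ)) ∧
    (dk k / (((k + 1) * m₀ - 1).factorial : ℚ)) ^ 2 >
        dk (k - 1) / ((k * m₀ - 1).factorial : ℚ) *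
          (dk (k + 1) / (((k + 2) * m₀ - 1).factorial : ℚ)) := by
  constructor
  · refine mul_lt_sq_div_factorial_of_logConcave hm hk ?_ (by rw [ck]; positivity)
    simpa only [ck_div_factorial] using zpowDivFactorialSq_mul_le_sq (by norm_num) hk
  · refine mul_lt_sq_div_factorial_of_logConcave hm hk ?_ (by rw [dk]; positivity)
    simpa only [dk_div_factorial] using zpowDivFactorialSq_mul_le_sq le_rfl hk
end

section
/- Fix an integer j ≥ 0. Then c(n, n−j) = n^{2j}/(2^j·j!) + o(n^{2j}) as n → ∞; that is, c(n,n−j)·2^j·j!/n^{2j} → 1 as n → ∞. -/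
/-!
A permutation with `n - j` cycles on `n` points, `k` of them nontrivial, has support of size
`k + j`; as nontrivial cycles have length at least `2`, its support has at most `2j` points,
with equality exactly for the products of `j` disjoint transpositions. These number
`n.descFactorial (2j) / (2^j j!) ~ n^(2j) / (2^j j!)`, while a permutation with smaller support
permutes some `(2j-1)`-subset, so there are at most `n^(2j-1)` of them.
-/

/-- The signless Stirling number of the first kind `c(n,j)`: the number of permutations of an
`n`-element set with exactly `j` orbits (disjoint cycles, fixed points counted as cycles). -/
noncomputable def stirC (n j : ℕ) : ℕ :=
  Nat.card {σ : Equiv.Perm (Fin n) // σ.cycleType.card + (n - σ.support.card) = j}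

open Finset Filter Topology
open scoped Nat

theorem Multiset.eq_replicate_of_sum_le_card_nsmul {β : Type*} [AddCommMonoid β] [PartialOrder β]
    [IsOrderedCancelAddMonoid β] {s : Multiset β} {a : β} (h : ∀ x ∈ s, a ≤ x)
    (hsum : s.sum ≤ Multiset.card s • a) : s = Multiset.replicate (Multiset.card s) a := by
  refine Multiset.eq_replicate_card.2 fun b hb => by_contra fun hba => ?_
  have := Multiset.sum_lt_sum (f := fun _ => a) (g := id) (fun x hx => h x hx)
    ⟨b, hb, lt_of_le_of_ne (h b hb) (Ne.symm hba)⟩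
  simp only [Multiset.map_const', Multiset.sum_replicate, Multiset.map_id] at this
  exact (this.trans_le hsum).false

namespace Equiv.Perm

variable {α : Type*} [Fintype α] [DecidableEq α]

theorem card_filter_support_subset (s : Finset α) :
    #{σ : Perm α | σ.support ⊆ s} = (#s)! := by
  rw [← Fintype.card_subtype, ← Fintype.card_coe s, ← Fintype.card_perm,
    Fintype.card_congr (Perm.subtypeEquivSubtypePerm (· ∈ s))]
  refine Fintype.card_congr (Equiv.subtypeEquivRight fun σ => ?_)
  simp only [Finset.subset_iff, mem_support, not_imp_comm]

theorem card_filter_card_support_le {m : ℕ} (hm : m ≤ Fintype.card α) :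
    #{σ : Perm α | #σ.support ≤ m} ≤ Fintype.card α ^ m := by
  have hcover : ({σ : Perm α | #σ.support ≤ m} : Finset _) ⊆
      (powersetCard m univ).biUnion fun s => {σ : Perm α | σ.support ⊆ s} := by
    intro σ hσ
    obtain ⟨s, hσs, -, hs⟩ := exists_subsuperset_card_eq (subset_univ σ.support)
      (mem_filter.1 hσ).2 (by rwa [card_univ])
    exact mem_biUnion.2 ⟨s, mem_powersetCard_univ.2 hs, mem_filter.2 ⟨mem_univ _, hσs⟩⟩
  calc #{σ : Perm α | #σ.support ≤ m}
      ≤ ∑ s ∈ powersetCard m univ, #{σ : Perm α | σ.support ⊆ s} :=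
        (card_le_card hcover).trans card_biUnion_le
    _ = (Fintype.card α).choose m * m ! := by
        rw [sum_congr rfl fun s hs => by rw [card_filter_support_subset, (mem_powersetCard.1 hs).2],
          sum_const, card_powersetCard, card_univ, smul_eq_mul]
    _ = (Fintype.card α).descFactorial m := by
        rw [Nat.descFactorial_eq_factorial_mul_choose, mul_comm]
    _ ≤ Fintype.card α ^ m := Nat.descFactorial_le_pow _ _

-- Multiplied out: `card α ^ (m - 1)` would not equal `card α ^ m / card α` at `m = 0`.
theorem card_filter_card_support_lt_mul_le {m : ℕ} (hm : m ≤ Fintype.card α) :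
    #{σ : Perm α | #σ.support < m} * Fintype.card α ≤ Fintype.card α ^ m := by
  cases m with
  | zero => simp
  | succ k =>
    simp_rw [Nat.lt_succ_iff, pow_succ]
    exact Nat.mul_le_mul_right _ (card_filter_card_support_le (by omega))

theorem card_filter_cycleType_replicate_two_mul {j : ℕ} (hj : 2 * j ≤ Fintype.card α) :
    #{σ : Perm α | σ.cycleType = Multiset.replicate j 2} * (2 ^ j * j !) =
      (Fintype.card α).descFactorial (2 * j) := by
  have hcount : ∏ n ∈ (Multiset.replicate j 2).toFinset,
      (Multiset.count n (Multiset.replicate j 2))! = j ! := by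
    rcases eq_or_ne j 0 with rfl | hj0
    · simp
    · simp [Multiset.toFinset_replicate, hj0]
  have h := card_of_cycleType_mul_eq (α := α) (Multiset.replicate j 2)
  rw [Multiset.sum_replicate, Multiset.prod_replicate, hcount, smul_eq_mul, mul_comm j 2,
    if_pos ⟨hj, fun a ha => (Multiset.eq_of_mem_replicate ha).ge⟩,
    ← Nat.factorial_mul_descFactorial hj, mul_assoc, mul_left_comm] at h
  exact Nat.eq_of_mul_eq_mul_left (Nat.factorial_pos _) h

theorem two_mul_card_cycleType_le (σ : Perm α) :
    2 * Multiset.card σ.cycleType ≤ #σ.support := by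
  rw [← sum_cycleType, mul_comm, ← smul_eq_mul]
  exact Multiset.card_nsmul_le_sum fun _ => two_le_of_mem_cycleType

variable {σ : Perm α} {j : ℕ}

theorem cycleType_eq_replicate_two_of_card_support_le
    (h : #σ.support ≤ 2 * Multiset.card σ.cycleType) :
    σ.cycleType = Multiset.replicate (Multiset.card σ.cycleType) 2 :=
  Multiset.eq_replicate_of_sum_le_card_nsmul (fun _ => two_le_of_mem_cycleType)
    (by rwa [sum_cycleType, smul_eq_mul, mul_comm])

theorem card_cycleType_add_card_sub_eq_of_cycleType_eq (hj : 2 * j ≤ Fintype.card α)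
    (hσ : σ.cycleType = Multiset.replicate j 2) :
    Multiset.card σ.cycleType + (Fintype.card α - #σ.support) = Fintype.card α - j := by
  rw [← sum_cycleType, hσ, Multiset.card_replicate, Multiset.sum_replicate, smul_eq_mul]
  omega

theorem cycleType_eq_replicate_two_or_card_support_lt
    (h : Multiset.card σ.cycleType + (Fintype.card α - #σ.support) = Fintype.card α - j) :
    σ.cycleType = Multiset.replicate j 2 ∨ #σ.support < 2 * j := by
  have h2 := two_mul_card_cycleType_le σ
  have hle := card_le_univ σ.support
  by_cases hlt : #σ.support < 2 * j
  · exact Or.inr hlt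
  · have hk : Multiset.card σ.cycleType = j := by omega
    exact Or.inl (hk ▸ cycleType_eq_replicate_two_of_card_support_le (by omega))

end Equiv.Perm

open Equiv Perm

theorem stirC_eq_card_filter (n k : ℕ) :
    stirC n k = #{σ : Perm (Fin n) | Multiset.card σ.cycleType + (n - #σ.support) = k} := by
  rw [stirC, Nat.card_eq_fintype_card, Fintype.card_subtype]

theorem descFactorial_le_stirC_mul {n j : ℕ} (hj : 2 * j ≤ n) :
    n.descFactorial (2 * j) ≤ stirC n (n - j) * (2 ^ j * j !) := by
  have hj' : 2 * j ≤ Fintype.card (Fin n) := by simpa using hj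
  have hinv := card_filter_cycleType_replicate_two_mul hj'
  rw [Fintype.card_fin] at hinv
  rw [← hinv, stirC_eq_card_filter]
  refine Nat.mul_le_mul_right _ (card_le_card fun σ hσ => ?_)
  simpa using card_cycleType_add_card_sub_eq_of_cycleType_eq hj' (mem_filter.1 hσ).2

theorem stirC_mul_mul_le {n j : ℕ} (hj : 2 * j ≤ n) :
    stirC n (n - j) * (2 ^ j * j !) * n ≤
      n.descFactorial (2 * j) * n + 2 ^ j * j ! * n ^ (2 * j) := by
  have hj' : 2 * j ≤ Fintype.card (Fin n) := by simpa using hj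
  have hinv := card_filter_cycleType_replicate_two_mul hj'
  have herr := card_filter_card_support_lt_mul_le hj'
  rw [Fintype.card_fin] at hinv herr
  have hsplit : stirC n (n - j) ≤ #{σ : Perm (Fin n) | σ.cycleType = Multiset.replicate j 2} +
      #{σ : Perm (Fin n) | #σ.support < 2 * j} := by
    rw [stirC_eq_card_filter]
    refine (card_le_card fun σ hσ => ?_).trans (card_union_le _ _)
    simpa using cycleType_eq_replicate_two_or_card_support_lt (by simpa using (mem_filter.1 hσ).2)
  calc stirC n (n - j) * (2 ^ j * j !) * n
      ≤ (#{σ : Perm (Fin n) | σ.cycleType = Multiset.replicate j 2} +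
          #{σ : Perm (Fin n) | #σ.support < 2 * j}) * (2 ^ j * j !) * n := by gcongr
    _ ≤ n.descFactorial (2 * j) * n + 2 ^ j * j ! * n ^ (2 * j) := by
        rw [add_mul, add_mul, hinv, mul_comm _ (2 ^ j * j !), mul_assoc]
        gcongr

theorem tendsto_descFactorial_div_pow (k : ℕ) :
    Tendsto (fun n : ℕ => (n.descFactorial k : ℚ) / n ^ k) atTop (𝓝 1) := by
  rw [Rat.isEmbedding_coe_real.tendsto_nhds_iff]
  have hz : ∀ᶠ n : ℕ in atTop, ((n : ℝ) ^ k) ≠ 0 :=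
    (eventually_ne_atTop 0).mono fun n hn => by positivity
  simpa [Function.comp_def, Pi.div_def] using
    (Asymptotics.isEquivalent_iff_tendsto_one hz).1 (isEquivalent_descFactorial k)

/-- For fixed `j ≥ 0`, `c(n,n−j) = n^{2j}/(2^j·j!) + o(n^{2j})` as `n → ∞`;
i.e. `c(n,n−j)·2^j·j!/n^{2j} → 1`. -/
theorem stirling_first_kind_asymptotic (j : ℕ) :
    Filter.Tendsto
      (fun n : ℕ => (stirC n (n - j) : ℚ) * 2 ^ j * (j.factorial : ℚ) / (n : ℚ) ^ (2 * j))
      Filter.atTop (nhds 1) := by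
  have hlower := tendsto_descFactorial_div_pow (2 * j)
  have hupper : Tendsto (fun n : ℕ => (n.descFactorial (2 * j) : ℚ) / n ^ (2 * j) +
      (2 ^ j * j ! : ℕ) / n) atTop (𝓝 1) := by
    simpa using hlower.add (tendsto_const_nhds.div_atTop tendsto_natCast_atTop_atTop)
  refine tendsto_of_tendsto_of_tendsto_of_le_of_le' hlower hupper ?_ ?_ <;>
    filter_upwards [eventually_ge_atTop (2 * j), eventually_gt_atTop 0] with n hjn hn
  · rw [mul_assoc]
    gcongr
    exact_mod_cast descFactorial_le_stirC_mul hjn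
  · calc (stirC n (n - j) : ℚ) * 2 ^ j * j ! / n ^ (2 * j)
        = ((stirC n (n - j) * (2 ^ j * j !) * n : ℕ) : ℚ) / (n ^ (2 * j) * n) := by
          push_cast; field_simp
      _ ≤ ((n.descFactorial (2 * j) * n + 2 ^ j * j ! * n ^ (2 * j) : ℕ) : ℚ) /
            (n ^ (2 * j) * n) := by
          gcongr
          exact stirC_mul_mul_le hjn
      _ = (n.descFactorial (2 * j) : ℚ) / n ^ (2 * j) + (2 ^ j * j ! : ℕ) / n := by
          push_cast; field_simp
end

section
/- For every n ≥ 1 and every 1 ≤ j ≤ n−1, c(n,j)² ≥ c(n,j−1)·c(n,j+1); that is, for each fixed n the sequence {c(n,j)}_{j=0}^{n} is log-concave. -/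
/-!
A permutation of `Option α` is determined by the image `o` of `none` and the permutation of `α`
obtained by cutting `none` out of its cycle (`Equiv.Perm.decomposeOption`); this keeps the number
of cycles unless `o = none`, when it drops a fixed point. Hence
`c(n+1, j+1) = c(n, j) + n c(n, j+1)`, so `c(n, ·) = Nat.stirlingFirst n` is the coefficient
sequence of `x (x+1) ⋯ (x+n-1)`. Multiplying a generating function by `x + c` with `c ≥ 0`
preserves the inequalities `a i * a (l + 1) ≤ a (i + 1) * a l` for all `i ≤ l`, which give
log-concavity.
-/

open Finset

section LogConcave

variable {R : Type*} [CommSemiring R] [PartialOrder R]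

/-- For nonnegative sequences: log-concave without internal zeros. -/
def StronglyLogConcave (a : ℕ → R) : Prop :=
  ∀ i k, a i * a (i + k + 1) ≤ a (i + 1) * a (i + k)

theorem StronglyLogConcave.mul_le_sq {a : ℕ → R} (ha : StronglyLogConcave a) (i : ℕ) :
    a i * a (i + 2) ≤ a (i + 1) ^ 2 := by
  simpa [sq] using ha i 1

theorem StronglyLogConcave.X_add_C_mul [IsOrderedRing R] {a b : ℕ → R} {c : R}
    (ha : StronglyLogConcave a) (ha₀ : ∀ i, 0 ≤ a i) (hc : 0 ≤ c) (hb₀ : b 0 = 0)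
    (hb : ∀ i, b (i + 1) = a i + c * a (i + 1)) :
    StronglyLogConcave b := by
  have hb_nonneg : ∀ i, 0 ≤ b i
    | 0 => hb₀.ge
    | i + 1 => hb i ▸ add_nonneg (ha₀ i) (mul_nonneg hc (ha₀ _))
  rintro (_ | m) (_ | l)
  · simp [hb₀]
  · rw [hb₀, zero_mul]
    exact mul_nonneg (hb_nonneg _) (hb_nonneg _)
  · exact (mul_comm _ _).le
  · have h₁ : a m * a (m + l + 2) ≤ a (m + 1) * a (m + l + 1) := ha m (l + 1)
    have h₂ : a (m + 1) * a (m + l + 3) ≤ a (m + 2) * a (m + l + 2) := by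
      convert ha (m + 1) (l + 1) using 3 <;> omega
    -- the terms linear in `c` need the two-step inequality, obtained by chaining
    have h₃ : a m * a (m + l + 3) ≤ a (m + 2) * a (m + l + 1) :=
      (ha m (l + 2)).trans (by convert ha (m + 1) l using 3 <;> omega)
    rw [show m + 1 + (l + 1) = m + l + 2 by omega, hb, hb, hb, hb]
    calc (a m + c * a (m + 1)) * (a (m + l + 2) + c * a (m + l + 2 + 1))
        = a m * a (m + l + 2) + c * (a m * a (m + l + 3) + a (m + 1) * a (m + l + 2))
          + c ^ 2 * (a (m + 1) * a (m + l + 3)) := by ring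
      _ ≤ a (m + 1) * a (m + l + 1) + c * (a (m + 2) * a (m + l + 1) + a (m + 1) * a (m + l + 2))
          + c ^ 2 * (a (m + 2) * a (m + l + 2)) := by gcongr
      _ = (a (m + 1) + c * a (m + 1 + 1)) * (a (m + l + 1) + c * a (m + l + 1 + 1)) := by ring

end LogConcave

theorem Nat.stronglyLogConcave_stirlingFirst (n : ℕ) : StronglyLogConcave (stirlingFirst n) := by
  induction n with
  | zero => intro i k; simp
  | succ n ih =>
    exact ih.X_add_C_mul (fun _ => Nat.zero_le _) (Nat.zero_le n) (stirlingFirst_succ_zero n)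
      fun i => by rw [stirlingFirst_succ_succ, add_comm]

namespace Equiv.Perm

variable {α β : Type*}

theorem optionCongr_eq_extendDomain (e : Perm α) :
    e.optionCongr = e.extendDomain (optionIsSomeEquiv α).symm := by
  ext (_ | a) : 1
  · rw [extendDomain_apply_not_subtype _ _ (by simp)]; simp
  · rw [e.extendDomain_apply_subtype (optionIsSomeEquiv α).symm (b := some a) rfl]
    simp [optionIsSomeEquiv]

theorem permCongr_eq_extendDomain (e : α ≃ β) (σ : Perm α) :
    e.permCongr σ = σ.extendDomain (e.trans (subtypeUnivEquiv fun _ => trivial).symm) := by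
  ext b
  rw [extendDomain_apply_subtype _ _ trivial]
  simp [subtypeUnivEquiv]

variable [Fintype α] [DecidableEq α] [Fintype β] [DecidableEq β]

theorem card_parts_partition_add_sum_cycleType (σ : Perm α) :
    σ.partition.parts.card + σ.cycleType.sum = σ.cycleType.card + Fintype.card α := by
  have := σ.support.card_le_univ
  simp only [parts_partition, Multiset.card_add, Multiset.card_replicate, sum_cycleType]
  omega

theorem cycleType_eq_two_add_swap_mul {g : Perm α} {x : α} (hx : g x ≠ x) (hgg : g (g x) = x) :
    g.cycleType = {2} + (swap x (g x) * g).cycleType := by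
  have hdisj : Disjoint (swap x (g x)) (swap x (g x) * g) := by
    intro z
    by_cases hz : z = x ∨ z = g x
    · right
      rcases hz with rfl | rfl <;> simp [hgg]
    · push Not at hz
      exact Or.inl (swap_apply_of_ne_of_ne hz.1 hz.2)
  calc g.cycleType = (swap x (g x) * (swap x (g x) * g)).cycleType := by rw [swap_mul_self_mul]
    _ = {2} + (swap x (g x) * g).cycleType := by
      rw [hdisj.cycleType_mul, (isCycle_swap hx.symm).cycleType, card_support_swap hx.symm]

theorem card_cycleType_swap_mul {g : Perm α} {x : α} (hx : g x ≠ x) (hgg : g (g x) ≠ x) :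
    (swap x (g x) * g).cycleType.card = g.cycleType.card := by
  set c := g.cycleOf x
  have hc : c ∈ g.cycleFactorsFinset := cycleOf_mem_cycleFactorsFinset_iff.2 (mem_support.2 hx)
  have hcx : c x = g x := cycleOf_apply_self g x
  have hcc : c (c x) ≠ x := by rwa [hcx, cycleOf_apply_apply_self]
  have hrc : Disjoint (g * c⁻¹) c := disjoint_mul_inv_of_mem_cycleFactorsFinset hc
  -- removing `x` from its cycle `c` leaves a cycle, and the other cycles of `g` are untouched
  have hcyc : (swap x (c x) * c).IsCycle := (isCycle_cycleOf g hx).swap_mul (hcx ▸ hx) hcc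
  have hsupp : (swap x (c x) * c).support ⊆ c.support := by
    rw [support_swap_mul_eq c x hcc]; exact sdiff_subset
  have hsplit : swap x (g x) * g = (swap x (c x) * c) * (g * c⁻¹) := by
    rw [mul_assoc, ← hrc.commute.eq, inv_mul_cancel_right, hcx]
  have hcg : {#c.support} ≤ g.cycleType :=
    (isCycle_cycleOf g hx).cycleType ▸ cycleType_le_of_mem_cycleFactorsFinset hc
  have := Multiset.card_le_card hcg
  rw [hsplit, (hrc.symm.mono hsupp le_rfl).cycleType_mul, hcyc.cycleType,
    cycleType_mul_inv_mem_cycleFactorsFinset_eq_sub hc, (isCycle_cycleOf g hx).cycleType,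
    Multiset.card_add, Multiset.card_sub hcg]
  simp only [Multiset.card_singleton] at this ⊢
  omega

theorem card_parts_partition_swap_mul {g : Perm α} {x : α} (hx : g x ≠ x) :
    (swap x (g x) * g).partition.parts.card = g.partition.parts.card + 1 := by
  suffices (swap x (g x) * g).cycleType.card + g.cycleType.sum =
      g.cycleType.card + (swap x (g x) * g).cycleType.sum + 1 by
    have := card_parts_partition_add_sum_cycleType (swap x (g x) * g)
    have := card_parts_partition_add_sum_cycleType g
    omega
  by_cases hgg : g (g x) = x
  · rw [cycleType_eq_two_add_swap_mul hx hgg]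
    simp only [Multiset.singleton_add, Multiset.sum_cons, Multiset.card_cons]
    omega
  · rw [card_cycleType_swap_mul hx hgg, sum_cycleType, sum_cycleType, support_swap_mul_eq g x hgg,
      sdiff_singleton_eq_erase]
    have := card_erase_add_one (mem_support.2 hx)
    omega

theorem card_parts_partition_add_card_of_cycleType_eq {σ : Perm α} {τ : Perm β}
    (h : σ.cycleType = τ.cycleType) :
    σ.partition.parts.card + Fintype.card β = τ.partition.parts.card + Fintype.card α := by
  have := card_parts_partition_add_sum_cycleType σ
  have := card_parts_partition_add_sum_cycleType τ
  rw [h] at *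
  omega

theorem card_parts_partition_permCongr (e : α ≃ β) (σ : Perm α) :
    (e.permCongr σ).partition.parts.card = σ.partition.parts.card := by
  have h : cycleType (e.permCongr σ) = σ.cycleType := by
    rw [permCongr_eq_extendDomain, cycleType_extendDomain]
  have := card_parts_partition_add_card_of_cycleType_eq h
  have := Fintype.card_congr e
  omega

theorem card_parts_partition_optionCongr (e : Perm α) :
    (partition e.optionCongr).parts.card = e.partition.parts.card + 1 := by
  have h : cycleType e.optionCongr = e.cycleType := by
    rw [optionCongr_eq_extendDomain, cycleType_extendDomain]
  have := card_parts_partition_add_card_of_cycleType_eq h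
  have := Fintype.card_option (α := α)
  omega

theorem card_parts_partition_decomposeOption_symm (o : Option α) (e : Perm α) :
    (decomposeOption.symm (o, e)).partition.parts.card =
      e.partition.parts.card + if o = none then 1 else 0 := by
  rcases o with _ | a
  · simpa [← one_def] using card_parts_partition_optionCongr e
  · set σ := decomposeOption.symm (some a, e)
    have hσ : σ none = some a := by simp [σ]
    have := card_parts_partition_swap_mul (g := σ) (x := none) (by simp [hσ])
    rw [hσ, show swap none (some a) * σ = e.optionCongr by simp [σ],
      card_parts_partition_optionCongr] at this
    rw [if_neg (Option.some_ne_none a)]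
    omega

theorem card_perm_option_card_parts_partition_eq_succ (j : ℕ) :
    Nat.card {σ : Perm (Option α) // σ.partition.parts.card = j + 1} =
      Nat.card {e : Perm α // e.partition.parts.card = j} +
        Fintype.card α * Nat.card {e : Perm α // e.partition.parts.card = j + 1} := by
  simp only [Nat.card_eq_fintype_card, Fintype.card_subtype, card_filter]
  rw [← (decomposeOption (α := α)).symm.sum_comp, Fintype.sum_prod_type, Fintype.sum_option]
  simp only [card_parts_partition_decomposeOption_symm]
  simp

variable (α) in
theorem card_card_parts_partition_eq_stirlingFirst (j : ℕ) :
    Nat.card {σ : Perm α // σ.partition.parts.card = j} = Nat.stirlingFirst (Fintype.card α) j := by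
  refine Fintype.induction_empty_option (P := fun α _ => ∀ [DecidableEq α] (j : ℕ),
    Nat.card {σ : Perm α // σ.partition.parts.card = j} = Nat.stirlingFirst (Fintype.card α) j)
    ?_ ?_ ?_ α j
  · intro α β _ e ih _ j
    classical
    let := Fintype.ofEquiv β e.symm
    calc Nat.card {σ : Perm β // σ.partition.parts.card = j}
        = Nat.card {σ : Perm α // σ.partition.parts.card = j} :=
          Nat.card_congr (e.permCongr.subtypeEquiv fun σ => by
            rw [card_parts_partition_permCongr]).symm
      _ = Nat.stirlingFirst (Fintype.card β) j := by rw [ih, Fintype.card_congr e]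
  · intro _ j
    have h (σ : Perm PEmpty) : σ.partition.parts.card = 0 := by
      simp [parts_partition, Subsingleton.elim σ 1]
    rcases j with _ | j <;> simp [h]
  · intro α _ ih inst j
    classical
    obtain rfl : inst = fun a b => Option.instDecidableEq a b := Subsingleton.elim _ _
    rcases j with _ | j
    · have : IsEmpty {σ : Perm (Option α) // σ.partition.parts.card = 0} := by
        refine ⟨fun ⟨σ, h⟩ => ?_⟩
        have := σ.partition.parts_sum
        rw [Multiset.card_eq_zero.1 h, Fintype.card_option] at this
        simp at this
      rw [Nat.card_of_isEmpty, Fintype.card_option, Nat.stirlingFirst_succ_zero]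
    · rw [card_perm_option_card_parts_partition_eq_succ, ih, ih, Fintype.card_option,
        Nat.stirlingFirst_succ_succ]
      ring

end Equiv.Perm

theorem stirC_eq_stirlingFirst (n j : ℕ) : stirC n j = Nat.stirlingFirst n j :=
  calc stirC n j = Nat.card {σ : Equiv.Perm (Fin n) // σ.partition.parts.card = j} :=
        Nat.card_congr (Equiv.subtypeEquivRight fun σ => by simp [Equiv.Perm.parts_partition])
    _ = Nat.stirlingFirst n j := by
      rw [Equiv.Perm.card_card_parts_partition_eq_stirlingFirst, Fintype.card_fin]

theorem stirling_first_kind_log_concave_general (n j : ℕ) (hj1 : 1 ≤ j) :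
    stirC n (j - 1) * stirC n (j + 1) ≤ stirC n j ^ 2 := by
  obtain ⟨i, rfl⟩ := Nat.exists_eq_add_of_le' hj1
  simp only [stirC_eq_stirlingFirst, Nat.add_sub_cancel]
  exact (Nat.stronglyLogConcave_stirlingFirst n).mul_le_sq i

/-- For every `n ≥ 1` and `1 ≤ j ≤ n−1`,
`c(n,j)² ≥ c(n,j−1)·c(n,j+1)`: the sequence `{c(n,j)}_j` is log-concave. -/
theorem stirling_first_kind_log_concave (n j : ℕ) (hn : 1 ≤ n) (hj1 : 1 ≤ j) (hj2 : j ≤ n - 1) :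
    stirC n (j - 1) * stirC n (j + 1) ≤ stirC n j ^ 2 :=
  stirling_first_kind_log_concave_general n j hj1
end

section
/- For every integer k ≥ 1, d_k = c_k − (1/2)·Σ_{k_1+k_2=k−1} c_{k_1}·c_{k_2}, where the sum is over ordered pairs of nonnegative integers (k_1,k_2) with k_1 + k_2 = k−1. Equivalently, (k+1)^{k−2}/k! = (k+1)^{k−1}/k! − (1/2)·Σ_{k_1+k_2=k−1} ((k_1+1)^{k_1−1}/k_1!)·((k_2+1)^{k_2−1}/k_2!). -/
/-! The Abel polynomials `pₙ = X (X + n)^(n-1)` are of binomial type,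
`pₙ(x + y) = ∑ (n choose i) pᵢ(x) pⱼ(y)`: both sides vanish at `x = 0` except for the `i = 0`
term, and `p'ₙ₊₁ = (n + 1) pₙ(X + 1)` lets the derivative in `x` of the identity for `n + 1` be
read off from the identity for `n`. Since `pₙ(1) = n! cₙ`, taking `x = y = 1` gives
`∑ c_{k₁} c_{k₂} = p_{k-1}(2) / (k-1)! = 2 (k+1)^(k-2) / (k-1)!`, which is `2 (c_k - d_k)`. -/

open Polynomial Finset

namespace Polynomial

theorem eq_of_derivative_eq_of_eval_zero_eq {R : Type*} [Ring R] [IsAddTorsionFree R] {p q : R[X]}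
    (hd : derivative p = derivative q) (h0 : p.eval 0 = q.eval 0) : p = q := by
  have hC := eq_C_of_derivative_eq_zero (p := p - q) (by rw [derivative_sub, hd, sub_self])
  rw [coeff_zero_eq_eval_zero, eval_sub, h0, sub_self, map_zero] at hC
  exact sub_eq_zero.mp hC

section CommSemiring

variable {R : Type*} [CommSemiring R]

variable (R) in
noncomputable def abelPoly : ℕ → R[X]
  | 0 => 1
  | n + 1 => X * (X + (n + 1 : R[X])) ^ n

@[simp]
theorem abelPoly_zero : abelPoly R 0 = 1 := rfl

theorem abelPoly_succ (n : ℕ) : abelPoly R (n + 1) = X * (X + (n + 1 : R[X])) ^ n := rfl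

theorem abelPoly_succ_eval_zero (n : ℕ) : (abelPoly R (n + 1)).eval 0 = 0 := by
  simp [abelPoly_succ]

theorem derivative_abelPoly_succ (n : ℕ) :
    derivative (abelPoly R (n + 1)) = (n + 1 : R[X]) * (abelPoly R n).comp (X + 1) := by
  cases n with
  | zero => simp [abelPoly_succ]
  | succ n =>
    simp only [abelPoly_succ, derivative_mul, derivative_pow, derivative_X, derivative_natCast,
      derivative_one, mul_comp, pow_comp, add_comp, X_comp, natCast_comp, one_comp,
      add_tsub_cancel_right, Nat.cast_add_one, map_add, map_natCast, map_one]
    ring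

end CommSemiring

section CommRing

variable {R : Type*} [CommRing R] [IsAddTorsionFree R]

theorem abelPoly_comp_X_add_C (n : ℕ) (y : R) :
    (abelPoly R n).comp (X + C y) =
      ∑ p ∈ antidiagonal n,
        (n.choose p.1 : R[X]) * abelPoly R p.1 * C ((abelPoly R p.2).eval y) := by
  induction n with
  | zero => simp
  | succ n ih =>
    refine eq_of_derivative_eq_of_eval_zero_eq ?_ ?_
    · have hchoose (i : ℕ) : ((n + 1).choose (i + 1) : R[X]) * (i + 1 : R[X]) =
          (n + 1 : R[X]) * n.choose i := by
        exact_mod_cast congrArg (Nat.cast : ℕ → R[X]) (Nat.add_one_mul_choose_eq n i).symm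
      have hshift : (X + 1 : R[X]).comp (X + C y) = (X + C y).comp (X + 1) := by
        simp only [add_comp, X_comp, one_comp, C_comp]; ring
      calc derivative ((abelPoly R (n + 1)).comp (X + C y))
          = (n + 1 : R[X]) * ((abelPoly R n).comp (X + C y)).comp (X + 1) := by
            rw [derivative_comp, derivative_abelPoly_succ, mul_comp, comp_assoc, hshift, comp_assoc]
            simp
        _ = ∑ p ∈ antidiagonal n, ((n + 1).choose (p.1 + 1) : R[X]) * (p.1 + 1 : R[X]) *
              (abelPoly R p.1).comp (X + 1) * C ((abelPoly R p.2).eval y) := by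
            rw [ih, sum_comp, mul_sum]
            refine sum_congr rfl fun p _ => ?_
            rw [hchoose, mul_comp, mul_comp, natCast_comp, C_comp]
            ring
        _ = _ := by
            simp [Nat.sum_antidiagonal_succ, derivative_abelPoly_succ, mul_assoc]
    · simp [eval_finsetSum, Nat.sum_antidiagonal_succ, abelPoly_succ_eval_zero]

theorem abelPoly_eval_add (n : ℕ) (x y : R) :
    (abelPoly R n).eval (x + y) =
      ∑ p ∈ antidiagonal n, n.choose p.1 * (abelPoly R p.1).eval x * (abelPoly R p.2).eval y := by
  simpa [eval_finsetSum, add_comm x] using congrArg (eval x) (abelPoly_comp_X_add_C n y)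

end CommRing

end Polynomial

open scoped Nat

theorem ck_succ (n : ℕ) : ck (n + 1) = ((n : ℚ) + 2) ^ n / (n + 1)! := by
  rw [ck, show ((n + 1 : ℕ) : ℤ) - 1 = n by push_cast; ring, zpow_natCast]
  push_cast
  ring

theorem dk_succ (n : ℕ) : dk (n + 1) = ((n : ℚ) + 2) ^ n / (((n : ℚ) + 2) * (n + 1)!) := by
  rw [dk, show ((n + 1 : ℕ) : ℤ) - 2 = n - 1 by push_cast; ring, zpow_sub_one₀ (by positivity),
    zpow_natCast]
  push_cast
  field_simp
  ring

theorem abelPoly_eval_one (n : ℕ) : (abelPoly ℚ n).eval 1 = n ! * ck n := by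
  cases n with
  | zero => simp [ck]
  | succ n =>
    rw [ck_succ, abelPoly_succ]
    simp only [eval_mul, eval_X, eval_pow, eval_add, eval_natCast, eval_one, one_mul]
    field_simp
    ring

theorem abelPoly_eval_two (n : ℕ) : (abelPoly ℚ n).eval 2 = 2 * ((n : ℚ) + 2) ^ n / (n + 2) := by
  cases n with
  | zero => simp
  | succ n =>
    simp only [abelPoly_succ, eval_mul, eval_X, eval_pow, eval_add, eval_natCast, eval_one]
    push_cast
    field_simp
    ring

theorem sum_antidiagonal_ck_mul_ck (n : ℕ) :
    ∑ p ∈ antidiagonal n, ck p.1 * ck p.2 = 2 * ((n : ℚ) + 2) ^ n / ((n + 2) * n !) := by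
  have hterm : ∀ p ∈ antidiagonal n, ck p.1 * ck p.2 =
      n.choose p.1 * (abelPoly ℚ p.1).eval 1 * (abelPoly ℚ p.2).eval 1 / n ! := by
    rintro ⟨i, j⟩ hij
    rw [HasAntidiagonal.mem_antidiagonal] at hij
    subst hij
    rw [abelPoly_eval_one, abelPoly_eval_one, Nat.cast_add_choose]
    field_simp
  rw [sum_congr rfl hterm, ← sum_div, ← abelPoly_eval_add, one_add_one_eq_two, abelPoly_eval_two]
  field_simp

/-- For every `k ≥ 1`,
`d_k = c_k − (1/2)·Σ_{k₁+k₂=k−1} c_{k₁}·c_{k₂}`, the sum over ordered pairs of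
nonnegative integers with `k₁ + k₂ = k − 1`. -/
theorem dk_eq_ck_minus_convolution (k : ℕ) (hk : 1 ≤ k) :
    dk k = ck k - 1 / 2 * ∑ p ∈ Finset.HasAntidiagonal.antidiagonal (k - 1), ck p.1 * ck p.2 := by
  obtain ⟨n, rfl⟩ : ∃ n, k = n + 1 := ⟨k - 1, by omega⟩
  rw [Nat.add_sub_cancel, sum_antidiagonal_ck_mul_ck, ck_succ, dk_succ, Nat.factorial_succ]
  push_cast
  field_simp
  ring
end
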